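/- arXiv:2211.16966 — 4 statements merged into one kernel-verified Lean document; each statement's English description precedes it below -/
import Mathlib

section
/- If a uniformly 3-connected graph G on n vertices is constructed from complete graphs on four vertices by a sequence of j bridge operations, t edge joins, p primary spoke operations and s secondary spoke operations, then j + 1 ≥ p and consequently p ≤ ⌊(n−2)/3⌋. -/
open SimpleGraph

/-- The degree of a vertex, as the cardinality of its neighbor set. -/
noncomputable def vdeg {V : Type*} (G : SimpleGraph V) (v : V) : ℕ :=
  (G.neighborSet v).ncard

/-- The minimum degree of a graph. -/
noncomputable def minDeg {V : Type*} (G : SimpleGraph V) : ℕ :=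
  sInf (Set.range (vdeg G))

/-- `ν(G)`: the number of vertices of minimum degree. -/
noncomputable def nu {V : Type*} (G : SimpleGraph V) : ℕ :=
  {v | vdeg G v = minDeg G}.ncard

/-- A family of `m` pairwise independent (i.e. internally vertex-disjoint, pairwise distinct)
paths from `u` to `v`. -/
def IsIndepPathFamily {V : Type*} (G : SimpleGraph V) {u v : V} {m : ℕ}
    (W : Fin m → G.Walk u v) : Prop :=
  (∀ i, (W i).IsPath) ∧ Function.Injective W ∧
    ∀ i j, i ≠ j → ∀ x, x ∈ (W i).support → x ∈ (W j).support → x = u ∨ x = v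

/-- A graph on at least `k+1` vertices is uniformly `k`-connected if each pair of its vertices
is connected by `k` and not more than `k` independent paths. -/
def UniformlyConnected (k : ℕ) {V : Type*} [Fintype V] (G : SimpleGraph V) : Prop :=
  k + 1 ≤ Fintype.card V ∧
    ∀ u v : V, u ≠ v →
      (∃ W : Fin k → G.Walk u v, IsIndepPathFamily G W) ∧
      ∀ m : ℕ, (∃ W : Fin m → G.Walk u v, IsIndepPathFamily G W) → m ≤ k

/-- `k`-connected: more than `k` vertices, and still connected after deleting any fewer
than `k` vertices. -/
def KConnected (k : ℕ) {V : Type*} [Fintype V] (G : SimpleGraph V) : Prop :=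
  k < Fintype.card V ∧
    ∀ S : Finset V, S.card < k → (G.induce {v : V | v ∉ S}).Connected
/-- A finite simple graph, bundled with its vertex type. -/
structure FinGraph where
  V : Type
  [instFintype : Fintype V]
  graph : SimpleGraph V

attribute [instance] FinGraph.instFintype
/-- Hypothesis of the bridge operation: `v` has exactly the three distinct
neighbors `x`, `y`, `z` (so `v` has degree 3 and neighborhood `{x, y, z}`). -/
def BridgeHyp {V : Type*} (G : SimpleGraph V) (v x y z : V) : Prop :=
  x ≠ y ∧ x ≠ z ∧ y ≠ z ∧ G.neighborSet v = {x, y, z}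

/-- The bridge operation: `(G1 − v1) ∪ (G2 − v2) + x1x2 + y1y2 + z1z2`. -/
def BridgeGraph {V1 V2 : Type*} (G1 : SimpleGraph V1) (G2 : SimpleGraph V2)
    (v1 x1 y1 z1 : V1) (v2 x2 y2 z2 : V2) :
    SimpleGraph ({a : V1 // a ≠ v1} ⊕ {b : V2 // b ≠ v2}) :=
  SimpleGraph.fromRel (fun p q =>
    match p, q with
    | Sum.inl a, Sum.inl a' => G1.Adj a.1 a'.1
    | Sum.inr b, Sum.inr b' => G2.Adj b.1 b'.1
    | Sum.inl a, Sum.inr b =>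
        (a.1 = x1 ∧ b.1 = x2) ∨ (a.1 = y1 ∧ b.1 = y2) ∨ (a.1 = z1 ∧ b.1 = z2)
    | Sum.inr _, Sum.inl _ => False)
/-- Hypotheses of the spoke operation: `v`, `w`, `x` are distinct, `vw` is an edge,
and every vertex other than possibly `x` has degree 3. -/
def SpokeHyp {V : Type*} (G : SimpleGraph V) (v w x : V) : Prop :=
  v ≠ w ∧ v ≠ x ∧ w ≠ x ∧ G.Adj v w ∧ ∀ z : V, z ≠ x → vdeg G z = 3

/-- The spoke operation: `G + y − vw + vy + wy + xy`, where the new vertex `y`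
is `Sum.inr ()`. -/
def SpokeGraph {V : Type*} (G : SimpleGraph V) (v w x : V) : SimpleGraph (V ⊕ Unit) :=
  SimpleGraph.fromRel (fun p q =>
    match p, q with
    | Sum.inl a, Sum.inl b => G.Adj a b ∧ ¬(a = v ∧ b = w) ∧ ¬(a = w ∧ b = v)
    | Sum.inl a, Sum.inr _ => a = v ∨ a = w ∨ a = x
    | Sum.inr _, _ => False)
/-- The edge join of the edges `ab` and `cd`:
`G + x + y − ab − cd + ax + xb + cy + yd + xy`, where the new vertices `x` and `y`
are `Sum.inr false` and `Sum.inr true`. -/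
def EdgeJoinGraph {V : Type*} (G : SimpleGraph V) (a b c d : V) : SimpleGraph (V ⊕ Bool) :=
  SimpleGraph.fromRel (fun p q =>
    match p, q with
    | Sum.inl u, Sum.inl u' => G.Adj u u' ∧ ¬(u = a ∧ u' = b) ∧ ¬(u = b ∧ u' = a) ∧
        ¬(u = c ∧ u' = d) ∧ ¬(u = d ∧ u' = c)
    | Sum.inl u, Sum.inr false => u = a ∨ u = b
    | Sum.inl u, Sum.inr true => u = c ∨ u = d
    | Sum.inr i, Sum.inr i' => i ≠ i'
    | Sum.inr _, Sum.inl _ => False)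
/-- `H` is (up to isomorphism) the result of applying the bridge operation to `G1`, `G2`. -/
def IsBridgeOf (H G1 G2 : FinGraph) : Prop :=
  ∃ (v1 x1 y1 z1 : G1.V) (v2 x2 y2 z2 : G2.V),
    BridgeHyp G1.graph v1 x1 y1 z1 ∧ BridgeHyp G2.graph v2 x2 y2 z2 ∧
    Nonempty (H.graph ≃g BridgeGraph G1.graph G2.graph v1 x1 y1 z1 v2 x2 y2 z2)
/-- `H` is the result of a primary spoke operation on `G'` (here `deg x = 3`). -/
def IsPrimarySpokeOf (H G' : FinGraph) : Prop :=
  ∃ v w x : G'.V, SpokeHyp G'.graph v w x ∧ vdeg G'.graph x = 3 ∧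
    Nonempty (H.graph ≃g SpokeGraph G'.graph v w x)

/-- `H` is the result of a secondary spoke operation on `G'` (here `deg x > 3`). -/
def IsSecondarySpokeOf (H G' : FinGraph) : Prop :=
  ∃ v w x : G'.V, SpokeHyp G'.graph v w x ∧ 3 < vdeg G'.graph x ∧
    Nonempty (H.graph ≃g SpokeGraph G'.graph v w x)
/-- `H` is the result of an edge join of two distinct edges of the 3-regular
3-connected graph `G'`. -/
def IsEdgeJoinOf (H G' : FinGraph) : Prop :=
  (∀ z : G'.V, vdeg G'.graph z = 3) ∧ KConnected 3 G'.graph ∧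
  ∃ a b c d : G'.V, G'.graph.Adj a b ∧ G'.graph.Adj c d ∧ s(a, b) ≠ s(c, d) ∧
    Nonempty (H.graph ≃g EdgeJoinGraph G'.graph a b c d)
/-- `Constructed G j t p s`: the graph `G` is constructed from complete graphs on four
vertices by a sequence of `j` bridge operations, `t` edge joins, `p` primary spoke
operations and `s` secondary spoke operations. -/
inductive Constructed : FinGraph → ℕ → ℕ → ℕ → ℕ → Prop
  | base (G : FinGraph) : Nonempty (G.graph ≃g (⊤ : SimpleGraph (Fin 4))) →
      Constructed G 0 0 0 0
  | bridge (G G1 G2 : FinGraph) (j1 t1 p1 s1 j2 t2 p2 s2 : ℕ) :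
      Constructed G1 j1 t1 p1 s1 → Constructed G2 j2 t2 p2 s2 → IsBridgeOf G G1 G2 →
      Constructed G (j1 + j2 + 1) (t1 + t2) (p1 + p2) (s1 + s2)
  | edgeJoin (G G' : FinGraph) (j t p s : ℕ) :
      Constructed G' j t p s → IsEdgeJoinOf G G' → Constructed G j (t + 1) p s
  | primarySpoke (G G' : FinGraph) (j t p s : ℕ) :
      Constructed G' j t p s → IsPrimarySpokeOf G G' → Constructed G j t (p + 1) s
  | secondarySpoke (G G' : FinGraph) (j t p s : ℕ) :
      Constructed G' j t p s → IsSecondarySpokeOf G G' → Constructed G j t p (s + 1)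


/-!
Vertices of degree greater than 3 arise only from spoke operations, and a primary spoke
operation needs a 3-regular input. So, by induction on the construction, `p ≤ j + 1`, and even
`p ≤ j` whenever the graph is subcubic: a bridge does not lower the degree of any surviving
vertex (the edge from a neighbour of `v1` to `v1` is replaced by a bridge edge), an edge join is
applied to a cubic graph, and a spoke operation raises the degree of `x` to at least 4.
Counting vertices gives `n = 2j + 2t + p + s + 4 ≥ 3p + 2`.
-/

section Degree

variable {V W : Type*} {G : SimpleGraph V} {H : SimpleGraph W}

lemma vdeg_iso (e : G ≃g H) (v : V) : vdeg H (e v) = vdeg G v := by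
  simp only [vdeg, ← Nat.card_coe_set_eq]
  exact Nat.card_congr (e.mapNeighborSet v).symm

lemma vdeg_le_vdeg_of_injective [Finite W] {f : V → W} (hf : f.Injective) {u : V}
    (hadj : ∀ a, G.Adj u a → H.Adj (f u) (f a)) : vdeg G u ≤ vdeg H (f u) := by
  rw [vdeg, vdeg, ← Set.ncard_image_of_injective _ hf]
  exact Set.ncard_le_ncard (Set.image_subset_iff.2 hadj)

lemma vdeg_lt_vdeg_of_injective [Finite W] {f : V → W} (hf : f.Injective) {u : V}
    (hadj : ∀ a, G.Adj u a → H.Adj (f u) (f a)) {y : W} (hy : y ∉ Set.range f)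
    (hyu : H.Adj (f u) y) : vdeg G u < vdeg H (f u) := by
  rw [vdeg, vdeg, ← Set.ncard_image_of_injective _ hf]
  refine Set.ncard_lt_ncard ((Set.ssubset_iff_of_subset (Set.image_subset_iff.2 hadj)).2 ?_)
  exact ⟨y, hyu, fun hy' => hy (Set.image_subset_range _ _ hy')⟩

def Subcubic (G : SimpleGraph V) : Prop :=
  ∀ v, vdeg G v ≤ 3

lemma Subcubic.of_iso (e : G ≃g H) (h : Subcubic H) : Subcubic G :=
  fun v => vdeg_iso e v ▸ h (e v)

end Degree

section Bridge

variable {V1 V2 : Type*} {G1 : SimpleGraph V1} {G2 : SimpleGraph V2}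
  {v1 x1 y1 z1 : V1} {v2 x2 y2 z2 : V2}

lemma BridgeHyp.vdeg_eq_three (h : BridgeHyp G1 v1 x1 y1 z1) : vdeg G1 v1 = 3 :=
  Set.ncard_eq_three.2 ⟨x1, y1, z1, h.1, h.2.1, h.2.2.1, h.2.2.2⟩

lemma BridgeHyp.exists_bridgeGraph_adj_inr (h1 : BridgeHyp G1 v1 x1 y1 z1)
    (h2 : BridgeHyp G2 v2 x2 y2 z2) (a : {a : V1 // a ≠ v1}) :
    ∃ b : {b : V2 // b ≠ v2}, G1.Adj v1 a →
      (BridgeGraph G1 G2 v1 x1 y1 z1 v2 x2 y2 z2).Adj (Sum.inl a) (Sum.inr b) := by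
  have hne : ∀ b ∈ ({x2, y2, z2} : Set V2), b ≠ v2 := fun b hb =>
    (G2.ne_of_adj (show b ∈ G2.neighborSet v2 from h2.2.2.2 ▸ hb)).symm
  by_cases ha : G1.Adj v1 a
  · have ha' : a.1 ∈ ({x1, y1, z1} : Set V1) := h1.2.2.2 ▸ ha
    rcases ha' with hx | hy | hz
    · exact ⟨⟨x2, hne x2 (by simp)⟩, fun _ => by simp [BridgeGraph, hx]⟩
    · exact ⟨⟨y2, hne y2 (by simp)⟩, fun _ => by simp [BridgeGraph, hy]⟩
    · exact ⟨⟨z2, hne z2 (by simp)⟩, fun _ => by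
        simp [BridgeGraph, Set.mem_singleton_iff.1 hz]⟩
  · exact ⟨⟨x2, hne x2 (by simp)⟩, fun h => absurd h ha⟩

lemma vdeg_le_vdeg_bridgeGraph_inl [Finite V1] [Finite V2] (h1 : BridgeHyp G1 v1 x1 y1 z1)
    (h2 : BridgeHyp G2 v2 x2 y2 z2) (a : {a : V1 // a ≠ v1}) :
    vdeg G1 a ≤ vdeg (BridgeGraph G1 G2 v1 x1 y1 z1 v2 x2 y2 z2) (Sum.inl a) := by
  classical
  obtain ⟨b, hb⟩ := h1.exists_bridgeGraph_adj_inr h2 a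
  -- `v1` is sent to the endpoint of the bridge edge that replaces the edge `a v1`
  let f : V1 → {a : V1 // a ≠ v1} ⊕ {b : V2 // b ≠ v2} := fun c =>
    if hc : c = v1 then Sum.inr b else Sum.inl ⟨c, hc⟩
  have hfa : f a = Sum.inl a := dif_neg a.2
  have hf : f.Injective := by
    intro c c' hcc'
    simp only [f] at hcc'
    split_ifs at hcc' <;> simp_all
  refine hfa ▸ vdeg_le_vdeg_of_injective hf fun c hc => ?_
  rw [hfa]
  by_cases hcv : c = v1
  · subst hcv
    simpa [f] using hb hc.symm
  · simpa [f, hcv, BridgeGraph, hc, Subtype.ext_iff] using hc.ne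

lemma BridgeHyp.subcubic_of_bridgeGraph [Finite V1] [Finite V2] (h1 : BridgeHyp G1 v1 x1 y1 z1)
    (h2 : BridgeHyp G2 v2 x2 y2 z2) (h : Subcubic (BridgeGraph G1 G2 v1 x1 y1 z1 v2 x2 y2 z2)) :
    Subcubic G1 := by
  intro u
  by_cases hu : u = v1
  · rw [hu, h1.vdeg_eq_three]
  · exact (vdeg_le_vdeg_bridgeGraph_inl h1 h2 ⟨u, hu⟩).trans (h _)

end Bridge

section Spoke

variable {V : Type*} {G : SimpleGraph V} {v w x : V}

lemma vdeg_lt_vdeg_spokeGraph_inl [Finite V] (hvx : v ≠ x) (hwx : w ≠ x) :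
    vdeg G x < vdeg (SpokeGraph G v w x) (Sum.inl x) :=
  vdeg_lt_vdeg_of_injective Sum.inl_injective
    (fun a ha => by simp [SpokeGraph, ha, ha.ne, hvx.symm, hwx.symm])
    (y := Sum.inr ()) (by simp) (by simp [SpokeGraph])

lemma not_subcubic_spokeGraph [Finite V] (hvx : v ≠ x) (hwx : w ≠ x) (hx : 3 ≤ vdeg G x) :
    ¬ Subcubic (SpokeGraph G v w x) :=
  fun h => (hx.trans_lt (vdeg_lt_vdeg_spokeGraph_inl hvx hwx)).not_ge (h _)

lemma SpokeHyp.subcubic (h : SpokeHyp G v w x) (hx : vdeg G x = 3) : Subcubic G := by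
  intro z
  by_cases hz : z = x
  · rw [hz, hx]
  · rw [h.2.2.2.2 z hz]

end Spoke

namespace Constructed

variable {G : FinGraph} {j t p s : ℕ}

lemma primary_le_bridges (hc : Constructed G j t p s) :
    p ≤ j + 1 ∧ (Subcubic G.graph → p ≤ j) := by
  induction hc with
  | base => simp
  | bridge G G1 G2 j1 t1 p1 s1 j2 t2 p2 s2 _ _ hb ih1 ih2 =>
    obtain ⟨v1, x1, y1, z1, v2, x2, y2, z2, h1, h2, ⟨e⟩⟩ := hb
    refine ⟨by omega, fun hG => ?_⟩
    have := ih1.2 (h1.subcubic_of_bridgeGraph h2 (hG.of_iso e.symm))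
    omega
  | edgeJoin G G' j t p s _ he ih =>
    have := ih.2 fun z => (he.1 z).le
    omega
  | primarySpoke G G' j t p s _ hps ih =>
    obtain ⟨v, w, x, hsp, hx, ⟨e⟩⟩ := hps
    have := ih.2 (hsp.subcubic hx)
    exact ⟨by omega, fun hG => absurd (hG.of_iso e.symm)
      (not_subcubic_spokeGraph hsp.2.1 hsp.2.2.1 hx.ge)⟩
  | secondarySpoke G G' j t p s _ hss ih =>
    obtain ⟨v, w, x, hsp, hx, ⟨e⟩⟩ := hss
    exact ⟨ih.1, fun hG => absurd (hG.of_iso e.symm)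
      (not_subcubic_spokeGraph hsp.2.1 hsp.2.2.1 hx.le)⟩

lemma card_eq (hc : Constructed G j t p s) : Nat.card G.V = 2 * j + 2 * t + p + s + 4 := by
  induction hc with
  | base G he =>
    obtain ⟨e⟩ := he
    rw [Nat.card_congr e.toEquiv]
    simp
  | bridge G G1 G2 j1 t1 p1 s1 j2 t2 p2 s2 _ _ hb ih1 ih2 =>
    classical
    obtain ⟨v1, x1, y1, z1, v2, x2, y2, z2, -, -, ⟨e⟩⟩ := hb
    have hV1 := Nat.card_congr (Equiv.optionSubtypeNe v1)
    have hV2 := Nat.card_congr (Equiv.optionSubtypeNe v2)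
    rw [Finite.card_option] at hV1 hV2
    rw [Nat.card_congr e.toEquiv, Nat.card_sum]
    omega
  | edgeJoin G G' j t p s _ he ih =>
    obtain ⟨-, -, a, b, c, d, -, -, -, ⟨e⟩⟩ := he
    rw [Nat.card_congr e.toEquiv, Nat.card_sum, Nat.card_eq_fintype_card (α := Bool),
      Fintype.card_bool]
    omega
  | primarySpoke G G' j t p s _ hps ih =>
    obtain ⟨v, w, x, -, -, ⟨e⟩⟩ := hps
    rw [Nat.card_congr e.toEquiv, Nat.card_sum, Nat.card_unique (α := Unit)]
    omega
  | secondarySpoke G G' j t p s _ hss ih =>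
    obtain ⟨v, w, x, -, -, ⟨e⟩⟩ := hss
    rw [Nat.card_congr e.toEquiv, Nat.card_sum, Nat.card_unique (α := Unit)]
    omega

end Constructed

theorem primary_le_bridges_succ_general (G : FinGraph) (j t p s : ℕ)
    (hc : Constructed G j t p s) :
    p ≤ j + 1 ∧ p ≤ (Fintype.card G.V - 2) / 3 := by
  have hp := hc.primary_le_bridges.1
  have hn := hc.card_eq
  rw [Nat.card_eq_fintype_card] at hn
  exact ⟨hp, by omega⟩

/-- If a uniformly 3-connected graph `G` on `n` vertices is constructed from complete graphs
on four vertices by `j` bridge operations, `t` edge joins, `p` primary and `s` secondary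
spoke operations, then `j + 1 ≥ p` and consequently `p ≤ ⌊(n − 2)/3⌋`. -/
theorem primary_le_bridges_succ (G : FinGraph) (j t p s : ℕ)
    (hG : UniformlyConnected 3 G.graph) (hc : Constructed G j t p s) :
    p ≤ j + 1 ∧ p ≤ (Fintype.card G.V - 2) / 3 :=
  primary_le_bridges_succ_general G j t p s hc
end

section
/- Let G1 and G2 be graphs with vertices v1 ∈ V(G1) and v2 ∈ V(G2) of degree 3, with neighborhoods N(v1)={x1,y1,z1} and N(v2)={x2,y2,z2}, and let G = (G1−v1) ∪ (G2−v2) + x1x2 + y1y2 + z1z2. Let H be the clique-sum of the line graphs L(G1) and L(G2) formed by identifying the clique {v1x1, v1y1, v1z1} of L(G1) (the edges of G1 incident with v1) with the clique {v2x2, v2y2, v2z2} of L(G2) (the edges of G2 incident with v2), identifying v1x1 with v2x2, v1y1 with v2y2, and v1z1 with v2z2. Then the line graph L(G) is a proper subgraph of H. -/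
open SimpleGraph

/-- The clique-sum of the line graphs `L(G1)` and `L(G2)` obtained by identifying the clique
of edges of `G1` at `v1` with the clique of edges of `G2` at `v2`, where `v1x1` is identified
with `v2x2`, `v1y1` with `v2y2`, and `v1z1` with `v2z2`. The vertices are the edges of `G1`
(with the three edges at `v1` standing for the identified pairs) together with the edges of
`G2` not incident with `v2`. -/
def CliqueSumLineGraphs {V1 V2 : Type*} (G1 : SimpleGraph V1) (G2 : SimpleGraph V2)
    (v1 x1 y1 z1 : V1) (v2 x2 y2 z2 : V2) :
    SimpleGraph (G1.edgeSet ⊕ {f : G2.edgeSet // v2 ∉ (f : Sym2 V2)}) :=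
  SimpleGraph.fromRel (fun p q =>
    match p, q with
    | Sum.inl e, Sum.inl e' => ∃ a : V1, a ∈ (e : Sym2 V1) ∧ a ∈ (e' : Sym2 V1)
    | Sum.inr f, Sum.inr f' => ∃ b : V2, b ∈ (f.1 : Sym2 V2) ∧ b ∈ (f'.1 : Sym2 V2)
    | Sum.inl e, Sum.inr f =>
        ((e : Sym2 V1) = s(v1, x1) ∧ x2 ∈ (f.1 : Sym2 V2)) ∨
        ((e : Sym2 V1) = s(v1, y1) ∧ y2 ∈ (f.1 : Sym2 V2)) ∨
        ((e : Sym2 V1) = s(v1, z1) ∧ z2 ∈ (f.1 : Sym2 V2))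
    | Sum.inr _, Sum.inl _ => False)

/-!
The embedding `φ` keeps the edges of `G1 - v1` and of `G2 - v2` and sends a bridge edge `a b` to
the edge `v1 a` of `G1`, which the clique-sum identifies with `v2 b`. Each vertex of the
clique-sum thus stands for an edge of `G`, and the ends of `φ e` in this sense are exactly the
ends of `e`: a bridge edge is determined by its end in `G1` because `x1, y1, z1` are distinct.
So `φ` is injective, and edges of `G` with a common end go to adjacent vertices. It is not an
isomorphism onto the clique-sum: the bridge edges `x1x2` and `y1y2` are disjoint, while their
images `v1x1` and `v1y1` meet at `v1`.
-/

section BridgeOperation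

variable {V1 V2 : Type*}

def BridgeMatch (x1 y1 z1 : V1) (x2 y2 z2 : V2) (a : V1) (b : V2) : Prop :=
  (a = x1 ∧ b = x2) ∨ (a = y1 ∧ b = y2) ∨ (a = z1 ∧ b = z2)

variable {G1 : SimpleGraph V1} {G2 : SimpleGraph V2} {v1 x1 y1 z1 : V1} {v2 x2 y2 z2 : V2}

lemma BridgeMatch.right_unique {a : V1} {b b' : V2} (h1 : BridgeHyp G1 v1 x1 y1 z1)
    (hb : BridgeMatch x1 y1 z1 x2 y2 z2 a b) (hb' : BridgeMatch x1 y1 z1 x2 y2 z2 a b') :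
    b = b' := by
  obtain ⟨hxy, hxz, hyz, -⟩ := h1
  unfold BridgeMatch at hb hb'
  grind

lemma BridgeHyp.adj_of_mem {a : V1} (h1 : BridgeHyp G1 v1 x1 y1 z1)
    (ha : a = x1 ∨ a = y1 ∨ a = z1) : G1.Adj v1 a := by
  rw [← mem_neighborSet, h1.2.2.2]
  exact ha

lemma BridgeMatch.adj {a : V1} {b : V2} (h1 : BridgeHyp G1 v1 x1 y1 z1)
    (hb : BridgeMatch x1 y1 z1 x2 y2 z2 a b) : G1.Adj v1 a :=
  h1.adj_of_mem <| by rcases hb with ⟨rfl, -⟩ | ⟨rfl, -⟩ | ⟨rfl, -⟩ <;> simp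

namespace BridgeGraph
variable {a a' : {a : V1 // a ≠ v1}} {b b' : {b : V2 // b ≠ v2}}

@[simp] lemma adj_inl_inl :
    (BridgeGraph G1 G2 v1 x1 y1 z1 v2 x2 y2 z2).Adj (.inl a) (.inl a') ↔ G1.Adj a a' := by
  grind [BridgeGraph, fromRel_adj, adj_comm, Adj.ne]

@[simp] lemma adj_inr_inr :
    (BridgeGraph G1 G2 v1 x1 y1 z1 v2 x2 y2 z2).Adj (.inr b) (.inr b') ↔ G2.Adj b b' := by
  grind [BridgeGraph, fromRel_adj, adj_comm, Adj.ne]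

@[simp] lemma adj_inl_inr :
    (BridgeGraph G1 G2 v1 x1 y1 z1 v2 x2 y2 z2).Adj (.inl a) (.inr b) ↔
      BridgeMatch x1 y1 z1 x2 y2 z2 a b := by
  grind [BridgeGraph, BridgeMatch, fromRel_adj]

@[simp] lemma adj_inr_inl :
    (BridgeGraph G1 G2 v1 x1 y1 z1 v2 x2 y2 z2).Adj (.inr b) (.inl a) ↔
      BridgeMatch x1 y1 z1 x2 y2 z2 a b := by
  rw [adj_comm, adj_inl_inr]

end BridgeGraph

namespace CliqueSumLineGraphs
variable {e e' : G1.edgeSet} {f f' : {f : G2.edgeSet // v2 ∉ (f : Sym2 V2)}}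

@[simp] lemma adj_inl_inl :
    (CliqueSumLineGraphs G1 G2 v1 x1 y1 z1 v2 x2 y2 z2).Adj (.inl e) (.inl e') ↔
      G1.lineGraph.Adj e e' := by
  grind [CliqueSumLineGraphs, fromRel_adj, lineGraph_adj_iff_exists]

@[simp] lemma adj_inr_inr :
    (CliqueSumLineGraphs G1 G2 v1 x1 y1 z1 v2 x2 y2 z2).Adj (.inr f) (.inr f') ↔
      G2.lineGraph.Adj f f' := by
  grind [CliqueSumLineGraphs, fromRel_adj, lineGraph_adj_iff_exists, Subtype.ext_iff]

@[simp] lemma adj_inl_inr :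
    (CliqueSumLineGraphs G1 G2 v1 x1 y1 z1 v2 x2 y2 z2).Adj (.inl e) (.inr f) ↔
      ∃ a b, (e : Sym2 V1) = s(v1, a) ∧ BridgeMatch x1 y1 z1 x2 y2 z2 a b ∧
        b ∈ (f.1 : Sym2 V2) := by
  unfold BridgeMatch
  grind [CliqueSumLineGraphs, fromRel_adj]

@[simp] lemma adj_inr_inl :
    (CliqueSumLineGraphs G1 G2 v1 x1 y1 z1 v2 x2 y2 z2).Adj (.inr f) (.inl e) ↔
      ∃ a b, (e : Sym2 V1) = s(v1, a) ∧ BridgeMatch x1 y1 z1 x2 y2 z2 a b ∧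
        b ∈ (f.1 : Sym2 V2) := by
  rw [adj_comm, adj_inl_inr]

end CliqueSumLineGraphs

variable (v1 v2) in
def bridgeEdgeImage : ({a : V1 // a ≠ v1} ⊕ {b : V2 // b ≠ v2}) →
    ({a : V1 // a ≠ v1} ⊕ {b : V2 // b ≠ v2}) → Sym2 V1 ⊕ Sym2 V2
  | .inl a, .inl a' => .inl s(a.1, a'.1)
  | .inr b, .inr b' => .inr s(b.1, b'.1)
  | .inl a, .inr _ | .inr _, .inl a => .inl s(v1, a.1)

lemma bridgeEdgeImage_comm (p q) : bridgeEdgeImage v1 v2 p q = bridgeEdgeImage v1 v2 q p := by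
  cases p <;> cases q <;> simp [bridgeEdgeImage, Sym2.eq_swap]

variable (G1 G2 v2) in
def IsCliqueSumVertex : Sym2 V1 ⊕ Sym2 V2 → Prop
  | .inl s => s ∈ G1.edgeSet
  | .inr s => s ∈ G2.edgeSet ∧ v2 ∉ s

def IsCliqueSumVertex.toCliqueSum : {r : Sym2 V1 ⊕ Sym2 V2} → IsCliqueSumVertex G1 G2 v2 r →
    G1.edgeSet ⊕ {f : G2.edgeSet // v2 ∉ (f : Sym2 V2)}
  | .inl s, h => .inl ⟨s, h⟩
  | .inr s, h => .inr ⟨⟨s, h.1⟩, h.2⟩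

lemma isCliqueSumVertex_bridgeEdgeImage (h1 : BridgeHyp G1 v1 x1 y1 z1) {p q}
    (h : (BridgeGraph G1 G2 v1 x1 y1 z1 v2 x2 y2 z2).Adj p q) :
    IsCliqueSumVertex G1 G2 v2 (bridgeEdgeImage v1 v2 p q) := by
  rcases p with a | b <;> rcases q with a' | b'
  · exact BridgeGraph.adj_inl_inl.mp h
  · exact (BridgeGraph.adj_inl_inr.mp h).adj h1
  · exact (BridgeGraph.adj_inr_inl.mp h).adj h1
  · refine ⟨BridgeGraph.adj_inr_inr.mp h, ?_⟩
    simp [Sym2.mem_iff, Ne.symm b.2, Ne.symm b'.2]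

def bridgeEdgeMap (h1 : BridgeHyp G1 v1 x1 y1 z1) :
    (BridgeGraph G1 G2 v1 x1 y1 z1 v2 x2 y2 z2).edgeSet →
      G1.edgeSet ⊕ {f : G2.edgeSet // v2 ∉ (f : Sym2 V2)} := fun e =>
  IsCliqueSumVertex.toCliqueSum (r := Sym2.lift ⟨_, bridgeEdgeImage_comm⟩ e.1) <| by
    obtain ⟨e, he⟩ := e
    induction e using Sym2.ind
    exact isCliqueSumVertex_bridgeEdgeImage h1 he

variable (x1 y1 z1 x2 y2 z2) in
/-- `w` is an end of the edge of the bridge graph for which `t` stands. -/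
def IsEndOf : ({a : V1 // a ≠ v1} ⊕ {b : V2 // b ≠ v2}) →
    (G1.edgeSet ⊕ {f : G2.edgeSet // v2 ∉ (f : Sym2 V2)}) → Prop
  | .inl a, .inl e => a.1 ∈ (e : Sym2 V1)
  | .inr b, .inl e => ∃ a, (e : Sym2 V1) = s(v1, a) ∧ BridgeMatch x1 y1 z1 x2 y2 z2 a b
  | .inl _, .inr _ => False
  | .inr b, .inr f => b.1 ∈ (f.1 : Sym2 V2)

lemma mem_iff_isEndOf_bridgeEdgeMap (h1 : BridgeHyp G1 v1 x1 y1 z1)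
    (e : (BridgeGraph G1 G2 v1 x1 y1 z1 v2 x2 y2 z2).edgeSet) (w) :
    w ∈ e.1 ↔ IsEndOf x1 y1 z1 x2 y2 z2 w (bridgeEdgeMap h1 e) := by
  obtain ⟨e, he⟩ := e
  induction e using Sym2.ind with | _ p q => ?_
  rw [mem_edgeSet] at he
  simp only [bridgeEdgeMap, Sym2.lift_mk, Sym2.mem_iff]
  rcases p with ⟨a, ha⟩ | ⟨b, hb⟩ <;> rcases q with ⟨a', ha'⟩ | ⟨b', hb'⟩ <;>
    rcases w with ⟨c, hc⟩ | ⟨d, hd⟩ <;>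
    grind [BridgeMatch.right_unique, bridgeEdgeImage, IsCliqueSumVertex.toCliqueSum, IsEndOf,
      BridgeGraph.adj_inl_inl, BridgeGraph.adj_inl_inr, BridgeGraph.adj_inr_inl,
      BridgeGraph.adj_inr_inr]

lemma bridgeEdgeMap_injective (h1 : BridgeHyp G1 v1 x1 y1 z1) :
    Function.Injective
      (bridgeEdgeMap h1 : (BridgeGraph G1 G2 v1 x1 y1 z1 v2 x2 y2 z2).edgeSet → _) :=
  fun e f h => Subtype.ext <| Sym2.ext fun w => by
    rw [mem_iff_isEndOf_bridgeEdgeMap h1, mem_iff_isEndOf_bridgeEdgeMap h1, h]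

lemma CliqueSumLineGraphs.adj_of_isEndOf
    {t t' : G1.edgeSet ⊕ {f : G2.edgeSet // v2 ∉ (f : Sym2 V2)}} (hne : t ≠ t')
    {w : {a : V1 // a ≠ v1} ⊕ {b : V2 // b ≠ v2}}
    (hw : IsEndOf x1 y1 z1 x2 y2 z2 w t) (hw' : IsEndOf x1 y1 z1 x2 y2 z2 w t') :
    (CliqueSumLineGraphs G1 G2 v1 x1 y1 z1 v2 x2 y2 z2).Adj t t' := by
  rcases t with e | f <;> rcases t' with e' | f' <;> rcases w with c | d <;>
    grind [IsEndOf, lineGraph_adj_iff_exists, Sym2.mem_mk_left, adj_inl_inl, adj_inl_inr,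
      adj_inr_inl, adj_inr_inr]

lemma bridgeEdgeMap_adj (h1 : BridgeHyp G1 v1 x1 y1 z1)
    {e f : (BridgeGraph G1 G2 v1 x1 y1 z1 v2 x2 y2 z2).edgeSet}
    (h : (BridgeGraph G1 G2 v1 x1 y1 z1 v2 x2 y2 z2).lineGraph.Adj e f) :
    (CliqueSumLineGraphs G1 G2 v1 x1 y1 z1 v2 x2 y2 z2).Adj (bridgeEdgeMap h1 e)
      (bridgeEdgeMap h1 f) := by
  obtain ⟨hne, w, hwe, hwf⟩ := lineGraph_adj_iff_exists.mp h
  exact CliqueSumLineGraphs.adj_of_isEndOf ((bridgeEdgeMap_injective h1).ne hne)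
    ((mem_iff_isEndOf_bridgeEdgeMap h1 e w).mp hwe) ((mem_iff_isEndOf_bridgeEdgeMap h1 f w).mp hwf)

end BridgeOperation

theorem lineGraph_bridge_proper_subgraph_general {V1 V2 : Type}
    (G1 : SimpleGraph V1) (G2 : SimpleGraph V2)
    (v1 x1 y1 z1 : V1) (v2 x2 y2 z2 : V2)
    (h1 : BridgeHyp G1 v1 x1 y1 z1) (h2 : BridgeHyp G2 v2 x2 y2 z2) :
    ∃ φ : (BridgeGraph G1 G2 v1 x1 y1 z1 v2 x2 y2 z2).edgeSet →
        (G1.edgeSet ⊕ {f : G2.edgeSet // v2 ∉ (f : Sym2 V2)}),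
      Function.Injective φ ∧
      (∀ a b, (BridgeGraph G1 G2 v1 x1 y1 z1 v2 x2 y2 z2).lineGraph.Adj a b →
        (CliqueSumLineGraphs G1 G2 v1 x1 y1 z1 v2 x2 y2 z2).Adj (φ a) (φ b)) ∧
      (¬ Function.Surjective φ ∨ ∃ a b,
        (CliqueSumLineGraphs G1 G2 v1 x1 y1 z1 v2 x2 y2 z2).Adj (φ a) (φ b) ∧
        ¬ (BridgeGraph G1 G2 v1 x1 y1 z1 v2 x2 y2 z2).lineGraph.Adj a b) := by
  refine ⟨bridgeEdgeMap h1, bridgeEdgeMap_injective h1, fun _ _ => bridgeEdgeMap_adj h1,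
    .inr ?_⟩
  have hx : BridgeMatch x1 y1 z1 x2 y2 z2 x1 x2 := .inl ⟨rfl, rfl⟩
  have hy : BridgeMatch x1 y1 z1 x2 y2 z2 y1 y2 := .inr (.inl ⟨rfl, rfl⟩)
  refine ⟨⟨s(.inl ⟨x1, (hx.adj h1).ne'⟩, .inr ⟨x2, (h2.adj_of_mem (.inl rfl)).ne'⟩),
      (mem_edgeSet _).mpr (BridgeGraph.adj_inl_inr.mpr hx)⟩,
    ⟨s(.inl ⟨y1, (hy.adj h1).ne'⟩, .inr ⟨y2, (h2.adj_of_mem (.inr (.inl rfl))).ne'⟩),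
      (mem_edgeSet _).mpr (BridgeGraph.adj_inl_inr.mpr hy)⟩, ?_, ?_⟩
  · simp [bridgeEdgeMap, bridgeEdgeImage, IsCliqueSumVertex.toCliqueSum, lineGraph_adj_iff_exists,
      Subtype.ext_iff, h1.1, (hx.adj h1).ne']
  · simp [lineGraph_adj_iff_exists, h1.1, h2.1]

/-- **Lemma 16.** If `G` is the result of applying the bridge operation on `G1` and `G2`, and
`H` is the clique-sum of `L(G1)` and `L(G2)` formed by identifying the edges at `v1` with the
edges at `v2`, then `L(G)` is a proper subgraph of `H`: there is an injective homomorphism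
`φ` of `L(G)` into `H` which is not an isomorphism onto `H`. -/
theorem lineGraph_bridge_proper_subgraph {V1 V2 : Type} [Fintype V1] [Fintype V2]
    (G1 : SimpleGraph V1) (G2 : SimpleGraph V2)
    (v1 x1 y1 z1 : V1) (v2 x2 y2 z2 : V2)
    (h1 : BridgeHyp G1 v1 x1 y1 z1) (h2 : BridgeHyp G2 v2 x2 y2 z2) :
    ∃ φ : (BridgeGraph G1 G2 v1 x1 y1 z1 v2 x2 y2 z2).edgeSet →
        (G1.edgeSet ⊕ {f : G2.edgeSet // v2 ∉ (f : Sym2 V2)}),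
      Function.Injective φ ∧
      (∀ a b, (BridgeGraph G1 G2 v1 x1 y1 z1 v2 x2 y2 z2).lineGraph.Adj a b →
        (CliqueSumLineGraphs G1 G2 v1 x1 y1 z1 v2 x2 y2 z2).Adj (φ a) (φ b)) ∧
      (¬ Function.Surjective φ ∨ ∃ a b,
        (CliqueSumLineGraphs G1 G2 v1 x1 y1 z1 v2 x2 y2 z2).Adj (φ a) (φ b) ∧
        ¬ (BridgeGraph G1 G2 v1 x1 y1 z1 v2 x2 y2 z2).lineGraph.Adj a b) :=
  lineGraph_bridge_proper_subgraph_general G1 G2 v1 x1 y1 z1 v2 x2 y2 z2 h1 h2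
end

section
/- A graph is uniformly 2-connected if and only if it is a cycle (on at least three vertices). -/
open SimpleGraph

/-!
Independent `u`–`v` paths leave `u` through pairwise distinct neighbours, so their number is at
most the degree of `u`. Hence a uniformly 2-connected graph has minimum degree at least 2, and a
2-regular graph has at most two independent paths between any two vertices.

If a vertex `u` of a uniformly 2-connected graph had three neighbours, let `a` be one of them. A
second `u`–`a` path closes the edge `ua` into a cycle `C`, on which `u` has two neighbours, so
some neighbour `c` of `u` is joined to `u` by an edge off `C`. One of the two independent `c`–`a`
paths avoids `u`; it first meets `C` at some `w ≠ u`, and the path `u c … w` together with the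
two arcs of `C` from `u` to `w` are three independent `u`–`w` paths.

Conversely, a connected 2-regular graph is a single cycle, and the two arcs of that cycle
between any two of its vertices are two independent paths.
-/

namespace SimpleGraph

variable {V : Type*} {G : SimpleGraph V}

namespace Walk

lemma IsPath.snd_eq_of_mem_edges {u v x : V} {p : G.Walk u v} (hp : p.IsPath)
    (h : s(u, x) ∈ p.edges) : p.snd = x :=
  hp.snd_of_toSubgraph_adj (adj_toSubgraph_iff_mem_edges.mpr h)

lemma IsPath.eq_cons_nil_of_snd_eq {u v : V} {p : G.Walk u v} (hp : p.IsPath) (h : G.Adj u v)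
    (hsnd : p.snd = v) : p = cons h Walk.nil := by
  cases p with
  | nil => exact absurd rfl h.ne
  | cons h' q =>
    rw [snd_cons] at hsnd
    subst hsnd
    rw [(isPath_iff_nil.mp ((cons_isPath_iff h' q).mp hp).1).eq_nil]

lemma IsPath.isCycle_cons_reverse {u v : V} {p : G.Walk u v} (hp : p.IsPath) (h : G.Adj u v)
    (hsnd : p.snd ≠ v) : (cons h p.reverse).IsCycle :=
  (cons_isCycle_iff _ _).mpr ⟨hp.reverse, fun he =>
    hsnd (hp.snd_eq_of_mem_edges (by simpa only [edges_reverse, List.mem_reverse] using he))⟩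

lemma exists_walk_to_first_mem (S : Set V) {c a : V} (p : G.Walk c a) (ha : a ∈ S) :
    ∃ w ∈ S, ∃ q : G.Walk c w, q.support ⊆ p.support ∧ ∀ x ∈ q.support, x ∈ S → x = w := by
  induction p with
  | nil => exact ⟨_, ha, Walk.nil, by simp, by simp⟩
  | @cons c _ _ h p ih =>
    by_cases hc : c ∈ S
    · exact ⟨c, hc, Walk.nil, by simp, by simp⟩
    obtain ⟨w, hw, q, hqp, hq⟩ := ih ha
    refine ⟨w, hw, cons h q, by simpa using List.cons_subset_cons _ hqp, ?_⟩
    simp only [support_cons, List.mem_cons, forall_eq_or_imp]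
    exact ⟨fun h => absurd h hc, hq⟩

variable {u w : V} {C : G.Walk u u}

section TakeUntil

variable [DecidableEq V]

lemma IsCycle.isPath_reverse_dropUntil (hC : C.IsCycle) (hw : w ∈ C.support) (hwu : w ≠ u) :
    (C.dropUntil w hw).reverse.IsPath := by
  rw [← C.take_spec hw] at hC
  exact (hC.isPath_of_append_right (not_nil_of_ne hwu.symm)).reverse

lemma IsCycle.takeUntil_ne_reverse_dropUntil (hC : C.IsCycle) (hw : w ∈ C.support)
    (hwu : w ≠ u) : C.takeUntil w hw ≠ (C.dropUntil w hw).reverse := by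
  intro heq
  obtain ⟨e, he⟩ := List.exists_mem_of_ne_nil _
    (mt edges_eq_nil.mp (not_nil_of_ne hwu.symm) : (C.takeUntil w hw).edges ≠ [])
  refine hC.isTrail.disjoint_edges_takeUntil_dropUntil hw he ?_
  rwa [heq, edges_reverse, List.mem_reverse] at he

lemma IsCycle.eq_or_eq_of_mem_takeUntil_of_mem_dropUntil (hC : C.IsCycle) (hw : w ∈ C.support)
    {x : V} (hxA : x ∈ (C.takeUntil w hw).support) (hxB : x ∈ (C.dropUntil w hw).support) :
    x = u ∨ x = w := by
  have hnd := hC.support_nodup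
  rw [← C.take_spec hw, tail_support_append] at hnd
  rcases (mem_support_iff _).mp hxA with hxu | hxA
  · exact .inl hxu
  rcases (mem_support_iff _).mp hxB with hxw | hxB
  · exact .inr hxw
  exact absurd hxB (List.disjoint_of_nodup_append hnd hxA)

end TakeUntil

lemma IsCycle.exists_arcs (hC : C.IsCycle) (hw : w ∈ C.support) (hwu : w ≠ u) :
    ∃ A B : G.Walk u w, A.IsPath ∧ B.IsPath ∧ A ≠ B ∧
      (∀ x ∈ A.support, x ∈ B.support → x = u ∨ x = w) ∧
      A.support ⊆ C.support ∧ B.support ⊆ C.support ∧ A.edges ⊆ C.edges ∧ B.edges ⊆ C.edges := by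
  classical
  exact ⟨_, _, hC.isPath_takeUntil hw, hC.isPath_reverse_dropUntil hw hwu,
    hC.takeUntil_ne_reverse_dropUntil hw hwu,
    fun _ hxA hxB => hC.eq_or_eq_of_mem_takeUntil_of_mem_dropUntil hw hxA (by simpa using hxB),
    C.support_takeUntil_subset_support hw,
    by simpa using C.support_dropUntil_subset_support hw,
    C.edges_takeUntil_subset_edges hw,
    by simpa using C.edges_dropUntil_subset_edges hw⟩

end Walk

lemma IsCycles.exists_isCycle_forall_mem_support [Finite V] {u : V} (hcyc : G.IsCycles)
    (hconn : G.Connected) (hu : (G.neighborSet u).Nonempty) :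
    ∃ C : G.Walk u u, C.IsCycle ∧ ∀ v, v ∈ C.support := by
  obtain ⟨C, hC, hverts⟩ := hcyc.exists_cycle_toSubgraph_verts_eq_connectedComponentSupp
    (c := G.connectedComponentMk u) rfl hu
  refine ⟨C, hC, fun v => ?_⟩
  rw [← Walk.mem_verts_toSubgraph, hverts, ConnectedComponent.mem_supp_iff,
    ConnectedComponent.eq]
  exact hconn.preconnected v u

end SimpleGraph

section IndepPathFamily

variable {V : Type*} {G : SimpleGraph V} {u v : V}

lemma isIndepPathFamily_zero : IsIndepPathFamily G (![] : Fin 0 → G.Walk u v) :=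
  ⟨fun i => i.elim0, fun i => i.elim0, fun i => i.elim0⟩

lemma isIndepPathFamily_cons {m : ℕ} {W : Fin m → G.Walk u v} (hW : IsIndepPathFamily G W)
    {p : G.Walk u v} (hp : p.IsPath) (hne : ∀ i, p ≠ W i)
    (hdisj : ∀ i, ∀ x ∈ p.support, x ∈ (W i).support → x = u ∨ x = v) :
    IsIndepPathFamily G (Fin.cons p W : Fin (m + 1) → G.Walk u v) := by
  obtain ⟨hpath, hinj, hindep⟩ := hW
  refine ⟨Fin.cases hp hpath, Fin.cons_injective_iff.mpr ⟨?_, hinj⟩, ?_⟩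
  · rintro ⟨i, rfl⟩
    exact hne i rfl
  · intro i j hij x hxi hxj
    induction i using Fin.cases <;> induction j using Fin.cases
    · exact absurd rfl hij
    · exact hdisj _ x hxi hxj
    · exact hdisj _ x hxj hxi
    · exact hindep _ _ (fun h => hij (congrArg Fin.succ h)) x hxi hxj

lemma isIndepPathFamily_pair {A B : G.Walk u v} (hA : A.IsPath) (hB : B.IsPath) (hAB : A ≠ B)
    (hdisj : ∀ x ∈ A.support, x ∈ B.support → x = u ∨ x = v) :
    IsIndepPathFamily G ![A, B] :=
  isIndepPathFamily_cons (isIndepPathFamily_cons isIndepPathFamily_zero hB nofun nofun) hA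
    (Fin.forall_fin_one.mpr hAB) (Fin.forall_fin_one.mpr hdisj)

namespace IsIndepPathFamily

variable {m : ℕ} {W : Fin m → G.Walk u v}

lemma snd_injective (hW : IsIndepPathFamily G W) (huv : u ≠ v) :
    Function.Injective fun i => (W i).snd := by
  intro i j (hij : (W i).snd = (W j).snd)
  by_contra hne
  have hadj : ∀ k, G.Adj u (W k).snd := fun k => (W k).adj_snd (Walk.not_nil_of_ne huv)
  rcases hW.2.2 i j hne (W i).snd ((W i).getVert_mem_support 1)
    (by rw [hij]; exact (W j).getVert_mem_support 1) with h | h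
  · exact (hadj i).ne h.symm
  · have huv' : G.Adj u v := h ▸ hadj i
    exact hne <| hW.2.1 <| ((hW.1 i).eq_cons_nil_of_snd_eq huv' h).trans
      ((hW.1 j).eq_cons_nil_of_snd_eq huv' (hij ▸ h)).symm

lemma card_le_vdeg [Finite V] (hW : IsIndepPathFamily G W) (huv : u ≠ v) : m ≤ vdeg G u := by
  have := Set.ncard_le_ncard_of_injOn (s := Set.univ) (t := G.neighborSet u)
    (fun i => (W i).snd) (fun i _ => (W i).adj_snd (Walk.not_nil_of_ne huv))
    (hW.snd_injective huv).injOn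
  rwa [Set.ncard_univ, Nat.card_fin] at this

lemma notMem_support_or (hW : IsIndepPathFamily G W) {i j : Fin m} (hij : i ≠ j) {z : V}
    (hzu : z ≠ u) (hzv : z ≠ v) : z ∉ (W i).support ∨ z ∉ (W j).support := by
  by_contra! h
  exact (hW.2.2 i j hij z h.1 h.2).elim hzu hzv

end IsIndepPathFamily

lemma SimpleGraph.Walk.IsCycle.exists_isIndepPathFamily_three {C : G.Walk u u}
    (hC : C.IsCycle) (hv : v ∈ C.support) (hvu : v ≠ u) {Q : G.Walk u v} (hQ : Q.IsPath)
    (hQC : ∀ x ∈ Q.support, x ∈ C.support → x = u ∨ x = v) (hQe : ¬Q.edges ⊆ C.edges) :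
    ∃ W : Fin 3 → G.Walk u v, IsIndepPathFamily G W := by
  obtain ⟨A, B, hA, hB, hAB, hdisj, hAC, hBC, hAe, hBe⟩ := hC.exists_arcs hv hvu
  refine ⟨Fin.cons Q ![A, B], isIndepPathFamily_cons (isIndepPathFamily_pair hA hB hAB hdisj)
    hQ (Fin.forall_fin_two.mpr ⟨?_, ?_⟩) (Fin.forall_fin_two.mpr ⟨?_, ?_⟩)⟩
  · rintro rfl; exact hQe hAe
  · rintro rfl; exact hQe hBe
  · exact fun x hxQ hxA => hQC x hxQ (hAC hxA)
  · exact fun x hxQ hxB => hQC x hxQ (hBC hxB)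

lemma SimpleGraph.Walk.IsCycle.exists_isIndepPathFamily_three_of_adj_of_walk
    {C : G.Walk u u} (hC : C.IsCycle) {c a : V} (hc : G.Adj u c) (hcC : s(u, c) ∉ C.edges)
    (R : G.Walk c a) (ha : a ∈ C.support) (hRu : u ∉ R.support) :
    ∃ w ≠ u, ∃ W : Fin 3 → G.Walk u w, IsIndepPathFamily G W := by
  classical
  obtain ⟨w, hwC, R', hR'R, hR'C⟩ := R.exists_walk_to_first_mem {x | x ∈ C.support} ha
  have hwu : w ≠ u := fun hwu => hRu (hR'R (hwu ▸ R'.end_mem_support))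
  refine ⟨w, hwu, hC.exists_isIndepPathFamily_three hwC hwu (Q := Walk.cons hc R'.bypass)
    ((Walk.cons_isPath_iff _ _).mpr
      ⟨R'.bypass_isPath, fun hu => hRu (hR'R (R'.support_bypass_subset_support hu))⟩)
    (fun x hx hxC => ?_) (fun hsub => hcC (hsub (by simp)))⟩
  rcases (Walk.mem_support_iff _).mp hx with hxu | hx
  · exact .inl hxu
  · exact .inr (hR'C x (R'.support_bypass_subset_support (by simpa using hx)) hxC)

end IndepPathFamily

section UniformlyConnected

variable {V : Type*} [Fintype V] {G : SimpleGraph V} {k : ℕ}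

lemma UniformlyConnected.connected (h : UniformlyConnected k G) (hk : 0 < k) : G.Connected := by
  have : Nonempty V := Fintype.card_pos_iff.mp (by have := h.1; omega)
  refine (connected_iff G).mpr ⟨fun x y => ?_, this⟩
  by_cases hxy : x = y
  · exact hxy ▸ Reachable.refl x
  obtain ⟨W, -⟩ := (h.2 x y hxy).1
  exact ⟨W ⟨0, hk⟩⟩

lemma UniformlyConnected.le_vdeg (h : UniformlyConnected k G) (v : V) : k ≤ vdeg G v := by
  rcases Nat.eq_zero_or_pos k with rfl | hk
  · exact Nat.zero_le _
  obtain ⟨w, hw⟩ := Fintype.exists_ne_of_one_lt_card (by have := h.1; omega) v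
  obtain ⟨W, hW⟩ := (h.2 v w hw.symm).1
  exact hW.card_le_vdeg hw.symm

lemma UniformlyConnected.exists_isPath_snd_ne (h : UniformlyConnected k G) (hk : 1 < k)
    {u v : V} (huv : u ≠ v) : ∃ P : G.Walk u v, P.IsPath ∧ P.snd ≠ v := by
  obtain ⟨W, hW⟩ := (h.2 u v huv).1
  by_cases h0 : (W ⟨0, by omega⟩).snd = v
  · refine ⟨W ⟨1, hk⟩, hW.1 _, fun h1 => ?_⟩
    exact absurd (hW.snd_injective huv (h0.trans h1.symm)) (by simp)
  · exact ⟨_, hW.1 _, h0⟩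

lemma UniformlyConnected.exists_walk_notMem_support (h : UniformlyConnected k G) (hk : 1 < k)
    {u v z : V} (huv : u ≠ v) (hzu : z ≠ u) (hzv : z ≠ v) : ∃ R : G.Walk u v, z ∉ R.support := by
  obtain ⟨W, hW⟩ := (h.2 u v huv).1
  rcases hW.notMem_support_or (i := ⟨0, by omega⟩) (j := ⟨1, hk⟩) (by simp) hzu hzv with h | h
  exacts [⟨_, h⟩, ⟨_, h⟩]

lemma UniformlyConnected.vdeg_le_two (h : UniformlyConnected 2 G) (u : V) : vdeg G u ≤ 2 := by
  by_contra! hdeg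
  obtain ⟨a, ha : G.Adj u a⟩ : (G.neighborSet u).Nonempty :=
    Set.nonempty_of_ncard_ne_zero (by unfold vdeg at hdeg; omega)
  obtain ⟨P, hP, hPa⟩ := h.exists_isPath_snd_ne one_lt_two ha.ne
  set C := Walk.cons ha P.reverse with hCdef
  have hCu : ∀ x, s(u, x) ∈ C.edges → x = a ∨ x = P.snd := by
    intro x hx
    rw [hCdef, Walk.edges_cons, List.mem_cons, Walk.edges_reverse, List.mem_reverse] at hx
    exact hx.imp Sym2.congr_right.mp fun hx => (hP.snd_eq_of_mem_edges hx).symm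
  obtain ⟨c, hc, hcC⟩ : ∃ c, G.Adj u c ∧ c ∉ ({a, P.snd} : Set V) :=
    Set.exists_mem_notMem_of_ncard_lt_ncard ((Set.ncard_insert_le _ _).trans_lt (by
      rw [Set.ncard_singleton]; exact hdeg))
  simp only [Set.mem_insert_iff, Set.mem_singleton_iff, not_or] at hcC
  obtain ⟨R, hRu⟩ := h.exists_walk_notMem_support one_lt_two hcC.1 hc.ne ha.ne
  have hC : C.IsCycle := hP.isCycle_cons_reverse ha hPa
  obtain ⟨w, hwu, W, hW⟩ := hC.exists_isIndepPathFamily_three_of_adj_of_walk hc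
    (fun he => (hCu c he).elim hcC.1 hcC.2) R
    (List.mem_cons_of_mem _ P.reverse.start_mem_support) hRu
  exact absurd ((h.2 u w hwu.symm).2 3 ⟨W, hW⟩) (by norm_num)

lemma uniformlyConnected_two_of_connected_of_vdeg_eq_two (hconn : G.Connected)
    (hdeg : ∀ v, vdeg G v = 2) (hcard : 3 ≤ Fintype.card V) : UniformlyConnected 2 G := by
  refine ⟨hcard, fun u v huv => ⟨?_, fun m ⟨W, hW⟩ => hdeg u ▸ hW.card_le_vdeg huv⟩⟩
  obtain ⟨C, hC, hCall⟩ := IsCycles.exists_isCycle_forall_mem_support (fun w _ => hdeg w) hconn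
    (Set.nonempty_of_ncard_ne_zero ((hdeg u).trans_ne two_ne_zero))
  obtain ⟨A, B, hA, hB, hAB, hdisj, -⟩ := hC.exists_arcs (hCall v) huv.symm
  exact ⟨_, isIndepPathFamily_pair hA hB hAB hdisj⟩

end UniformlyConnected

/-- A graph is uniformly 2-connected if and only if it is a cycle (i.e. a connected
2-regular graph) on at least three vertices. -/
theorem uniformlyTwoConnected_iff_cycle {V : Type} [Fintype V] (G : SimpleGraph V) :
    UniformlyConnected 2 G ↔ (G.Connected ∧ (∀ v, vdeg G v = 2) ∧ 3 ≤ Fintype.card V) :=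
  ⟨fun h => ⟨h.connected two_pos, fun v => (h.vdeg_le_two v).antisymm (h.le_vdeg v), h.1⟩,
    fun ⟨hconn, hdeg, hcard⟩ => uniformlyConnected_two_of_connected_of_vdeg_eq_two hconn hdeg hcard⟩
end

section
/- For every n ≥ 4, the wheel graph W_n on n vertices is uniformly 3-connected. -/
open SimpleGraph

/-- `Wheel m` is the wheel graph on `m + 1` vertices (i.e. `W_{m+1}`): a hub `none` adjacent
to all the vertices of a cycle on the `m` rim vertices `some i`. -/
def Wheel (m : ℕ) : SimpleGraph (Option (Fin m)) :=
  SimpleGraph.fromRel (fun p q =>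
    match p, q with
    | none, some _ => True
    | some i, some j => j.val = (i.val + 1) % m
    | _, _ => False)

/-!
Every rim vertex of a wheel has degree 3, and the second vertices of independent `u`–`v` paths
are distinct neighbours of `u`; since every pair of distinct vertices contains a rim vertex, no
pair is joined by more than 3 independent paths. Conversely, the hub reaches a rim vertex `j`
directly and through `j + 1` and `j - 1`, while two rim vertices are joined through the hub and
along the two arcs into which they cut the rim.
-/

namespace SimpleGraph

variable {V : Type*} {G : SimpleGraph V} {u v : V}

def IsPathSupport (G : SimpleGraph V) (u v : V) (l : List V) : Prop :=
  l.IsChain G.Adj ∧ l.Nodup ∧ l.head? = some u ∧ l.getLast? = some v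

theorem IsPathSupport.exists_isPath {l : List V} (h : IsPathSupport G u v l) :
    ∃ p : G.Walk u v, p.IsPath ∧ p.support = l := by
  obtain ⟨hchain, hnodup, hhead, hlast⟩ := h
  have hne : l ≠ [] := by rintro rfl; simp at hhead
  let p := Walk.ofSupport l hne hchain
  refine ⟨p.copy (by simpa [List.head?_eq_some_head hne] using hhead)
    (by simpa [List.getLast?_eq_some_getLast hne] using hlast), ?_, ?_⟩
  · rw [Walk.isPath_copy, Walk.isPath_def, Walk.support_ofSupport]
    exact hnodup
  · simp [p]

theorem isPathSupport_map_range {f : ℕ → V} {k : ℕ} (hadj : ∀ t < k, G.Adj (f t) (f (t + 1)))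
    (hinj : Set.InjOn f (Set.Iic k)) :
    IsPathSupport G (f 0) (f k) ((List.range (k + 1)).map f) := by
  refine ⟨List.isChain_map_of_isChain f (R := fun a b => G.Adj (f a) (f b)) (fun _ _ h => h)
    ((List.isChain_range_succ _ _).mpr hadj), ?_, by simp [List.head?_range],
    by simp [List.getLast?_range]⟩
  refine List.Nodup.map_on (fun x hx y hy hxy => hinj ?_ ?_ hxy) List.nodup_range
  · simpa [Nat.lt_succ_iff] using hx
  · simpa [Nat.lt_succ_iff] using hy

namespace IsIndepPathFamily

variable {k : ℕ} {W : Fin k → G.Walk u v}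

theorem reverse (h : IsIndepPathFamily G W) : IsIndepPathFamily G fun i => (W i).reverse := by
  obtain ⟨hpath, hinj, hdisj⟩ := h
  refine ⟨fun i => (hpath i).reverse, fun i j hij => hinj (Walk.reverse_injective hij), ?_⟩
  intro i j hij x hi hj
  rw [Walk.support_reverse, List.mem_reverse] at hi hj
  exact (hdisj i j hij x hi hj).symm

theorem injective_snd (h : IsIndepPathFamily G W) (huv : u ≠ v) :
    Function.Injective fun i => (W i).snd := by
  obtain ⟨hpath, hinj, hdisj⟩ := h
  intro i j (hsnd : (W i).snd = (W j).snd)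
  by_contra hij
  have hnil : ∀ i, ¬(W i).Nil := fun i => Walk.not_nil_of_ne huv
  have hedge : ∀ i, (W i).snd = v → ∃ h : G.Adj u v, W i = h.toWalk := by
    intro i hv
    have hmem := Walk.mk_start_snd_mem_edges (hnil i)
    rw [hv] at hmem
    exact ⟨_, (hpath i).eq_adj_toWalk_of_mem_edges hmem⟩
  have hj : (W i).snd ∈ (W j).support := hsnd ▸ (W j).getVert_mem_support 1
  rcases hdisj i j hij _ ((W i).getVert_mem_support 1) hj with hu | hv
  · exact (Walk.adj_snd (hnil i)).ne hu.symm
  · obtain ⟨_, hi⟩ := hedge i hv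
    obtain ⟨_, hj⟩ := hedge j (hsnd ▸ hv)
    exact hij (hinj (hi.trans hj.symm))

theorem card_le_degree (h : IsIndepPathFamily G W) (huv : u ≠ v) [Fintype (G.neighborSet u)] :
    k ≤ G.degree u := by
  classical
  have hmaps : ∀ i ∈ Finset.univ, (W i).snd ∈ G.neighborFinset u := fun i _ =>
    (G.mem_neighborFinset _ _).mpr (Walk.adj_snd (Walk.not_nil_of_ne huv))
  simpa using Finset.card_le_card_of_injOn _ hmaps (h.injective_snd huv).injOn

end IsIndepPathFamily

theorem exists_isIndepPathFamily_of_pairwise (L : List (List V))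
    (hL : ∀ l ∈ L, IsPathSupport G u v l)
    (hpw : L.Pairwise fun l l' => l ≠ l' ∧ ∀ x ∈ l, x ∈ l' → x = u ∨ x = v) :
    ∃ W : Fin L.length → G.Walk u v, IsIndepPathFamily G W := by
  choose W hW using fun i : Fin L.length => (hL _ (L.get_mem i)).exists_isPath
  have hrel : ∀ i j : Fin L.length, i < j →
      L.get i ≠ L.get j ∧ ∀ x ∈ L.get i, x ∈ L.get j → x = u ∨ x = v :=
    fun i j hij => List.pairwise_iff_get.mp hpw i j hij
  refine ⟨W, fun i => (hW i).1, fun i j hij => ?_, fun i j hij x hi hj => ?_⟩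
  · by_contra hne
    rcases lt_or_gt_of_ne hne with h | h
    · exact (hrel i j h).1 (by rw [← (hW i).2, ← (hW j).2, hij])
    · exact (hrel j i h).1 (by rw [← (hW i).2, ← (hW j).2, hij])
  · rw [(hW i).2] at hi
    rw [(hW j).2] at hj
    rcases lt_or_gt_of_ne hij with h | h
    · exact (hrel i j h).2 x hi hj
    · exact (hrel j i h).2 x hj hi

end SimpleGraph

open scoped Fin.NatCast Fin.CommRing

namespace Fin

variable {m : ℕ} [NeZero m]

theorem add_natCast_ne_self {k : ℕ} (hk : 0 < k) (hkm : k < m) (i : Fin m) : i + k ≠ i := by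
  intro h
  have : (k : Fin m) = 0 := by simpa using congrArg (· - i) h
  exact absurd (Nat.le_of_dvd hk (natCast_eq_zero.mp this)) (by omega)

theorem add_one_ne_self (hm : 2 ≤ m) (i : Fin m) : i + 1 ≠ i := by
  simpa using add_natCast_ne_self (k := 1) Nat.one_pos hm i

theorem add_one_ne_sub_one (hm : 3 ≤ m) (i : Fin m) : i + 1 ≠ i - 1 := by
  have := add_natCast_ne_self (k := 2) Nat.two_pos hm (i - 1)
  rwa [Nat.cast_ofNat, sub_add_eq_add_sub, add_sub_assoc, ← one_add_one_eq_two,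
    add_sub_cancel_right] at this

theorem val_sub_add_val_sub {i j : Fin m} (hij : i ≠ j) : (j - i).val + (i - j).val = m := by
  have hpos : 0 < (j - i).val := Nat.pos_of_ne_zero fun h => hij (sub_eq_zero.mp (Fin.ext h)).symm
  have hdvd : m ∣ (j - i).val + (i - j).val := by
    rw [← natCast_eq_zero, Nat.cast_add, cast_val_eq_self, cast_val_eq_self]
    ring
  have hlt := add_lt_add (j - i).isLt (i - j).isLt
  have hle := Nat.le_of_dvd (by omega) hdvd
  have := Nat.eq_zero_of_dvd_of_lt (Nat.dvd_sub hdvd dvd_rfl) (by omega)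
  omega

end Fin

namespace Wheel

variable {m : ℕ}

@[simp]
theorem adj_none_some (i : Fin m) : (Wheel m).Adj none (some i) := by
  simp [Wheel]

variable [NeZero m]

theorem adj_some_some {i j : Fin m} :
    (Wheel m).Adj (some i) (some j) ↔ i ≠ j ∧ (j = i + 1 ∨ i = j + 1) := by
  have hsucc : ∀ a b : Fin m, b = a + 1 ↔ b.val = (a.val + 1) % m := fun a b => by
    rw [Fin.ext_iff, Fin.val_add, Fin.val_one', Nat.add_mod_mod]
  simp [Wheel, hsucc]

theorem adj_some_add_one (hm : 2 ≤ m) (i : Fin m) : (Wheel m).Adj (some i) (some (i + 1)) :=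
  adj_some_some.mpr ⟨(Fin.add_one_ne_self hm i).symm, Or.inl rfl⟩

theorem eq_of_adj_some {i : Fin m} {x : Option (Fin m)} (h : (Wheel m).Adj (some i) x) :
    x = none ∨ x = some (i + 1) ∨ x = some (i - 1) := by
  rcases x with _ | j
  · exact Or.inl rfl
  · rcases (adj_some_some.mp h).2 with rfl | rfl <;> simp

theorem degree_some_le_three (i : Fin m) [Fintype ((Wheel m).neighborSet (some i))] :
    (Wheel m).degree (some i) ≤ 3 := by
  classical
  calc (Wheel m).degree (some i)
      ≤ ({none, some (i + 1), some (i - 1)} : Finset (Option (Fin m))).card := by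
        rw [← card_neighborFinset_eq_degree]
        refine Finset.card_le_card fun x hx => ?_
        simpa using eq_of_adj_some ((mem_neighborFinset _ _ _).mp hx)
    _ ≤ 3 := Finset.card_le_three

theorem card_le_three_of_isIndepPathFamily {u v : Option (Fin m)} (huv : u ≠ v) {k : ℕ}
    {W : Fin k → (Wheel m).Walk u v} (hW : IsIndepPathFamily (Wheel m) W) : k ≤ 3 := by
  classical
  match u, v, huv, W, hW with
  | some i, _, huv, _, hW => exact (hW.card_le_degree huv).trans (degree_some_le_three i)
  | none, some j, huv, _, hW =>
    exact (hW.reverse.card_le_degree huv.symm).trans (degree_some_le_three j)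
  | none, none, huv, _, _ => exact absurd rfl huv

theorem exists_isIndepPathFamily_none_some (hm : 3 ≤ m) (j : Fin m) :
    ∃ W : Fin 3 → (Wheel m).Walk none (some j), IsIndepPathFamily (Wheel m) W := by
  have h₁ := Fin.add_one_ne_self (by omega) j
  have h₂ := Fin.add_one_ne_self (by omega) (j - 1)
  have h₃ := Fin.add_one_ne_sub_one hm j
  have hadd := adj_some_add_one (by omega) j
  have hsub := adj_some_add_one (by omega) (j - 1)
  rw [sub_add_cancel] at h₂ hsub
  refine exists_isIndepPathFamily_of_pairwise
    [[none, some j], [none, some (j + 1), some j], [none, some (j - 1), some j]] ?_ ?_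
  · simp [IsPathSupport, hadd.symm, hsub, h₁, h₂.symm]
  · simp [h₁, h₂.symm, h₃]

def rimArc (i ε : Fin m) (k : ℕ) : List (Option (Fin m)) :=
  (List.range (k + 1)).map fun t : ℕ => some (i + t * ε)

theorem mem_rimArc {i ε : Fin m} {k : ℕ} {x : Option (Fin m)} :
    x ∈ rimArc i ε k ↔ ∃ t ≤ k, x = some (i + t * ε) := by
  simp [rimArc, eq_comm]

theorem isPathSupport_rimArc (hm : 2 ≤ m) (i : Fin m) {ε : Fin m} (hε : ε = 1 ∨ ε = -1) {k : ℕ}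
    (hk : k < m) : IsPathSupport (Wheel m) (some i) (some (i + k * ε)) (rimArc i ε k) := by
  have hεε : ε * ε = 1 := by rcases hε with rfl | rfl <;> simp
  have hadj : ∀ x : Fin m, (Wheel m).Adj (some x) (some (x + ε)) := by
    rcases hε with rfl | rfl
    · exact adj_some_add_one hm
    · intro x
      simpa [← sub_eq_add_neg] using (adj_some_add_one hm (x - 1)).symm
  have h := isPathSupport_map_range (G := Wheel m) (f := fun t : ℕ => some (i + t * ε)) (k := k)
    (fun t _ => by simpa [add_mul, add_assoc] using hadj (i + t * ε)) ?_
  · simp only [Nat.cast_zero, zero_mul, add_zero] at h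
    exact h
  intro t ht s hs hts
  have hmul : (t : Fin m) = s := by
    simpa [hεε, mul_assoc] using congrArg (· * ε) (add_left_cancel (Option.some_inj.mp hts))
  have := congrArg Fin.val hmul
  simp only [Fin.val_natCast] at this
  rwa [Nat.mod_eq_of_lt (by simp at ht; omega), Nat.mod_eq_of_lt (by simp at hs; omega)] at this

theorem mem_rimArc_inter {i : Fin m} {d d' : ℕ} (hdd' : d + d' = m) {x : Option (Fin m)}
    (hup : x ∈ rimArc i 1 d) (hdown : x ∈ rimArc i (-1) d') : x = some i ∨ x = some (i + d) := by
  obtain ⟨t, ht, rfl⟩ := mem_rimArc.mp hup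
  obtain ⟨s, hs, hts⟩ := mem_rimArc.mp hdown
  have hdvd : m ∣ t + s := by
    rw [← Fin.natCast_eq_zero, Nat.cast_add]
    linear_combination Option.some_inj.mp hts
  rcases Nat.eq_zero_or_pos (t + s) with h | h
  · left
    simp [show t = 0 by omega]
  · right
    simp [show t = d by have := Nat.le_of_dvd h hdvd; omega]

theorem exists_isIndepPathFamily_some_some (hm : 3 ≤ m) {i j : Fin m} (hij : i ≠ j) :
    ∃ W : Fin 3 → (Wheel m).Walk (some i) (some j), IsIndepPathFamily (Wheel m) W := by
  obtain ⟨d, hd⟩ : ∃ d, (j - i).val = d := ⟨_, rfl⟩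
  obtain ⟨d', hd'⟩ : ∃ d', (i - j).val = d' := ⟨_, rfl⟩
  have hdd' : d + d' = m := hd ▸ hd' ▸ Fin.val_sub_add_val_sub hij
  have hd0 : 0 < d := Nat.pos_of_ne_zero fun h => hij (sub_eq_zero.mp (Fin.ext (hd.trans h))).symm
  have hd'0 : 0 < d' := Nat.pos_of_ne_zero fun h => hij (sub_eq_zero.mp (Fin.ext (hd'.trans h)))
  have hup : IsPathSupport (Wheel m) (some i) (some j) (rimArc i 1 d) := by
    simpa [← hd] using isPathSupport_rimArc (by omega) i (Or.inl rfl) (k := d) (by omega)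
  have hdown : IsPathSupport (Wheel m) (some i) (some j) (rimArc i (-1) d') := by
    simpa [← hd', ← sub_eq_add_neg] using
      isPathSupport_rimArc (by omega) i (Or.inr rfl) (k := d') (by omega)
  refine exists_isIndepPathFamily_of_pairwise [[some i, none, some j], rimArc i 1 d,
    rimArc i (-1) d'] ?_ ?_
  · intro l hl
    simp only [List.mem_cons, List.not_mem_nil, or_false] at hl
    rcases hl with rfl | rfl | rfl
    · simp [IsPathSupport, hij, (adj_none_some i).symm]
    · exact hup
    · exact hdown
  have hnone : ∀ {ε : Fin m} {k : ℕ}, none ∉ rimArc i ε k := by simp [mem_rimArc]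
  have hhub : ∀ {ε : Fin m} {k : ℕ}, [some i, none, some j] ≠ rimArc i ε k :=
    fun h => hnone (h ▸ List.mem_cons_of_mem _ List.mem_cons_self)
  have hsnd : ∀ {ε : Fin m} {k : ℕ}, 0 < k → (rimArc i ε k)[1]? = some (some (i + ε)) :=
    fun {_ k} hk => by simp [rimArc, List.getElem?_range (by omega : 1 < k + 1)]
  have harcs : rimArc i 1 d ≠ rimArc i (-1) d' := fun h => by
    have := congrArg (·[1]?) h
    simp only [hsnd hd0, hsnd hd'0, Option.some_inj, ← sub_eq_add_neg] at this
    exact Fin.add_one_ne_sub_one hm i this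
  have hj : i + d = j := by simp [← hd]
  simpa [hnone, hhub, harcs, hj] using fun x => mem_rimArc_inter hdd' (i := i) (x := x)

theorem exists_isIndepPathFamily (hm : 3 ≤ m) {u v : Option (Fin m)} (huv : u ≠ v) :
    ∃ W : Fin 3 → (Wheel m).Walk u v, IsIndepPathFamily (Wheel m) W := by
  match u, v, huv with
  | none, none, huv => exact absurd rfl huv
  | none, some j, _ => exact exists_isIndepPathFamily_none_some hm j
  | some i, none, _ =>
    obtain ⟨W, hW⟩ := exists_isIndepPathFamily_none_some hm i
    exact ⟨_, hW.reverse⟩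
  | some i, some j, huv =>
    exact exists_isIndepPathFamily_some_some hm (Option.some_injective _ |>.ne_iff.mp huv)

end Wheel

/-- For every `n ≥ 4`, the wheel graph `W_n` on `n` vertices (here `Wheel (n - 1)`) is
uniformly 3-connected. -/
theorem wheel_uniformlyThreeConnected (n : ℕ) (hn : 4 ≤ n) :
    UniformlyConnected 3 (Wheel (n - 1)) := by
  have hm : 3 ≤ n - 1 := by omega
  have : NeZero (n - 1) := ⟨by omega⟩
  refine ⟨by simp; omega, fun u v huv => ⟨Wheel.exists_isIndepPathFamily hm huv, ?_⟩⟩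
  rintro k ⟨W, hW⟩
  exact Wheel.card_le_three_of_isIndepPathFamily huv hW
end
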